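/- Strict monotonicity of the expert summary in the non-minimal entry: assume conditions (N1), (Q1), (Q2). Then for every fixed u ∈ (0, C), the map v ↦ F(u, v) is strictly increasing on (0, C). -/

import Mathlib

/-!
For fixed `t`, the row objective increases strictly with `ν v`, since its coefficient
`G t · Φ₁(U t)` is positive, and `ν` increases strictly on `(0, C)`. Being continuous and coercive,
each row objective attains its infimum; evaluating the row of the smaller entry at a minimiser
`t₂` of the row of the larger one gives `F(u, v₁) ≤ rowObj u v₁ t₂ < rowObj u v₂ t₂ = F(u, v₂)`.
-/

/-- Logistic envelope `Φ₀(u) = log(1 + e^{-u})`. -/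
noncomputable def Phi0 (u : ℝ) : ℝ := Real.log (1 + Real.exp (-u))

/-- Logistic envelope `Φ₁(u) = log(1 + e^{u})`. -/
noncomputable def Phi1 (u : ℝ) : ℝ := Real.log (1 + Real.exp u)

/-- Row objective `t ↦ ν(u)·G(t)·Φ₀(U(t)) + ν(v)·G(t)·Φ₁(U(t))`. -/
noncomputable def rowObj (ν G U : ℝ → ℝ) (u v t : ℝ) : ℝ :=
  ν u * G t * Phi0 (U t) + ν v * G t * Phi1 (U t)

/-- Expert summary `F(u,v) = inf_t rowObj ν G U u v t`. -/
noncomputable def expertSummary (ν G U : ℝ → ℝ) (u v : ℝ) : ℝ :=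
  ⨅ t : ℝ, rowObj ν G U u v t

open Set Filter Topology

theorem Continuous.exists_isLeast_range_of_tendsto_cocompact {β α : Type*} [TopologicalSpace β]
    [Nonempty β] [LinearOrder α] [TopologicalSpace α] [ClosedIicTopology α] {f : β → α}
    (hf : Continuous f) (hlim : Tendsto f (cocompact β) atTop) : ∃ x, IsLeast (range f) (f x) :=
  let ⟨x, hx⟩ := hf.exists_forall_le hlim
  ⟨x, mem_range_self x, forall_mem_range.2 hx⟩

theorem strictMonoOn_Ioo_of_hasDerivAt_pos {f f' : ℝ → ℝ} {a b : ℝ}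
    (hf : ∀ x ∈ Ioo a b, HasDerivAt f (f' x) x) (hf' : ∀ x ∈ Ioo a b, 0 < f' x) :
    StrictMonoOn f (Ioo a b) := by
  refine strictMonoOn_of_hasDerivWithinAt_pos (f' := f') (convex_Ioo a b)
    (fun x hx => (hf x hx).continuousAt.continuousWithinAt) ?_ ?_ <;> rw [interior_Ioo]
  exacts [fun x hx => (hf x hx).hasDerivWithinAt, hf']

theorem Phi1_pos (x : ℝ) : 0 < Phi1 x :=
  Real.log_pos (lt_add_of_pos_right 1 (Real.exp_pos x))

theorem continuous_Phi1 : Continuous Phi1 :=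
  (continuous_const.add Real.continuous_exp).log fun x => (add_pos one_pos (Real.exp_pos x)).ne'

theorem continuous_Phi0 : Continuous Phi0 :=
  continuous_Phi1.comp continuous_neg

theorem continuous_rowObj {ν G U : ℝ → ℝ} (hG : Continuous G) (hU : Continuous U) (u v : ℝ) :
    Continuous (rowObj ν G U u v) := by
  unfold rowObj
  have := continuous_Phi0.comp hU
  have := continuous_Phi1.comp hU
  fun_prop

theorem rowObj_lt_rowObj {ν G U : ℝ → ℝ} {u v w t : ℝ} (hG : 0 < G t) (hν : ν v < ν w) :
    rowObj ν G U u v t < rowObj ν G U u w t := by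
  unfold rowObj
  have := Phi1_pos (U t)
  gcongr

theorem expert_summary_strict_mono_general
    (C : ℝ)
    -- (N1)
    (ν ν' : ℝ → ℝ)
    (hνderiv : ∀ u ∈ Set.Ioo 0 C, HasDerivAt ν (ν' u) u)
    (hν'pos : ∀ u ∈ Set.Ioo 0 C, 0 < ν' u)
    -- (Q1)
    (G U : ℝ → ℝ)
    (hGcont : Continuous G) (hGpos : ∀ t, 0 < G t)
    (hUcont : Continuous U)
    -- (Q2)
    (hQ2 : ∀ u ∈ Set.Icc 0 C, ∀ v ∈ Set.Icc 0 C, ¬(u = 0 ∧ v = 0) →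
      Filter.Tendsto (fun t => rowObj ν G U u v t) (Filter.cocompact ℝ) Filter.atTop ∧
      StrictConvexOn ℝ Set.univ (fun t => rowObj ν G U u v t)) :
    ∀ u ∈ Set.Ioo (0 : ℝ) C,
      StrictMonoOn (fun v => expertSummary ν G U u v) (Set.Ioo 0 C) := by
  intro u hu v₁ hv₁ v₂ hv₂ hlt
  have hν : StrictMonoOn ν (Ioo 0 C) := strictMonoOn_Ioo_of_hasDerivAt_pos hνderiv hν'pos
  have hleast : ∀ v ∈ Ioo 0 C, ∃ t, IsLeast (range (rowObj ν G U u v)) (rowObj ν G U u v t) :=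
    fun v hv => (continuous_rowObj hGcont hUcont u v).exists_isLeast_range_of_tendsto_cocompact
      (hQ2 u (Ioo_subset_Icc_self hu) v (Ioo_subset_Icc_self hv) fun h => hu.1.ne' h.1).1
  obtain ⟨t₁, ht₁⟩ := hleast v₁ hv₁
  obtain ⟨t₂, ht₂⟩ := hleast v₂ hv₂
  calc expertSummary ν G U u v₁ ≤ rowObj ν G U u v₁ t₂ := ciInf_le ht₁.bddBelow t₂
    _ < rowObj ν G U u v₂ t₂ := rowObj_lt_rowObj (hGpos t₂) (hν hv₁ hv₂ hlt)
    _ = expertSummary ν G U u v₂ := ht₂.isGLB.ciInf_eq.symm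

/-- **Strict monotonicity of the expert summary in the non-minimal entry.**
Under (N1), (Q1), (Q2), for every fixed `u ∈ (0,C)` the map `v ↦ F(u,v)` is strictly
increasing on `(0,C)`. -/
theorem expert_summary_strict_mono
    (C : ℝ) (hC : 0 < C)
    -- (N1)
    (ν ν' : ℝ → ℝ)
    (hνcont : ContinuousOn ν (Set.Icc 0 C))
    (hνpos : ∀ u ∈ Set.Icc 0 C, 0 < ν u)
    (hνderiv : ∀ u ∈ Set.Ioo 0 C, HasDerivAt ν (ν' u) u)
    (hν'pos : ∀ u ∈ Set.Ioo 0 C, 0 < ν' u)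
    -- (Q1)
    (G U : ℝ → ℝ)
    (hGcont : Continuous G) (hGpos : ∀ t, 0 < G t)
    (hUcont : Continuous U) (hUmono : StrictMono U) (hUsurj : Function.Surjective U)
    -- (Q2)
    (hQ2 : ∀ u ∈ Set.Icc 0 C, ∀ v ∈ Set.Icc 0 C, ¬(u = 0 ∧ v = 0) →
      Filter.Tendsto (fun t => rowObj ν G U u v t) (Filter.cocompact ℝ) Filter.atTop ∧
      StrictConvexOn ℝ Set.univ (fun t => rowObj ν G U u v t)) :
    ∀ u ∈ Set.Ioo (0 : ℝ) C,
      StrictMonoOn (fun v => expertSummary ν G U u v) (Set.Ioo 0 C) :=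
  expert_summary_strict_mono_general C ν ν' hνderiv hν'pos G U hGcont hGpos hUcont hQ2
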